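/- Let $a^1 \leq \cdots \leq a^m$ and $b^1 \leq \cdots \leq b^d$ be integers with $m \geq d$, and suppose the greedy swapping procedure pairs each $b^j$ with some $a^i \leq b^j$ (no cycles occur). Let $M$ be the order-preserving rematching of the bottom row with the set of paired top-row entries. If $a^h$ is a hole (an unpaired top-row entry), then after replacing each paired top-row entry $a^{i_j}$ by $b^j$ via $M$ and re-sorting the top row into increasing order, the entry in position $h$ of the sorted top row equals $a^h$. Equivalently: for every hole $a^h$, all bottom-row entries $b^j$ with $M(b^j)$ lying strictly left of position $h$ satisfy $b^j \leq a^h$, and all $b^j$ with $M(b^j)$ strictly right of position $h$ satisfy $b^j \geq a^h$. -/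

import Mathlib

/-! Common framework: two-row tableaux as pairs of (weakly increasing) lists of
integers, the greedy swapping procedure, the order-preserving rematching,
wall-crossing, and the charge-shift `Δ_e`.  Positions are 1-based. -/

/-- The entry of a list at 1-based position `i` (default `0` out of range). -/
def ent (L : List ℤ) (i : ℕ) : ℤ := L.getD (i - 1) 0

/-- Greedy pick: the top-row position chosen for a bottom entry of value `x`,
given the set `used` of already used top positions: the maximal unused position
whose entry is `≤ x` if one exists, otherwise the maximal unused position
(a "cycle"). -/
def pickPos (A : List ℤ) (used : Finset ℕ) (x : ℤ) : ℕ :=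
  let avail := (Finset.Icc 1 A.length) \ used
  let cand := avail.filter (fun i => ent A i ≤ x)
  if cand.Nonempty then WithBot.unbotD 0 cand.max else WithBot.unbotD 0 avail.max

/-- The set of used top-row positions after the first `j` steps of the greedy
swapping procedure (bottom entries processed in increasing order). -/
def usedPos (A B : List ℤ) : ℕ → Finset ℕ
  | 0 => ∅
  | j + 1 => insert (pickPos A (usedPos A B j) (ent B (j + 1))) (usedPos A B j)

/-- `Spos A B j` is the top-row position greedily matched with bottom position `j`. -/
def Spos (A B : List ℤ) (j : ℕ) : ℕ := pickPos A (usedPos A B (j - 1)) (ent B j)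

/-- No cycles occur: every bottom entry is matched with a top entry not exceeding it. -/
def NoCycles (A B : List ℤ) : Prop :=
  ∀ j, 1 ≤ j → j ≤ B.length → ent A (Spos A B j) ≤ ent B j

/-- The set of all matched (paired) top-row positions. -/
def matchedPos (A B : List ℤ) : Finset ℕ := usedPos A B B.length

/-- The order-preserving rematching: `Mpos A B j` is the `j`-th smallest matched
top-row position, so `M(b^j) = a^{Mpos A B j}`. -/
def Mpos (A B : List ℤ) (j : ℕ) : ℕ :=
  ((matchedPos A B).sort (· ≤ ·)).getD (j - 1) 0

/-- A top-row position is a hole if it is in range and never matched. -/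
def IsHole (A B : List ℤ) (i : ℕ) : Prop :=
  i ∈ Finset.Icc 1 A.length ∧ i ∉ matchedPos A B

/-- The top row after replacing each matched entry `M(b^j) = a^{i_j}` by `b^j`
(before re-sorting). -/
def swappedTop (A B : List ℤ) : List ℤ :=
  (List.range A.length).map (fun (t : ℕ) =>
    if (t + 1) ∈ matchedPos A B then
      ent B ((((matchedPos A B).sort (· ≤ ·)).idxOf (t + 1)) + 1)
    else ent A (t + 1))

/-- The top row after wall-crossing: swapped and re-sorted into increasing order. -/
def wcTop (A B : List ℤ) : List ℤ := List.insertionSort (· ≤ ·) (swappedTop A B)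

/-- The bottom row after wall-crossing: `j`-th entry is `a^{Mpos A B j}`. -/
def wcBot (A B : List ℤ) : List ℤ :=
  (List.range B.length).map (fun (t : ℕ) => ent A (Mpos A B (t + 1)))

/-- The charge shift `Δ_e` on the top row: prepend the `e` consecutive integers
starting at the smallest bottom entry, and add `e` to every old top entry. -/
def deltaTop (e : ℕ) (A B : List ℤ) : List ℤ :=
  (List.range e).map (fun i => ent B 1 + (i : ℤ)) ++ A.map (· + (e : ℤ))

/-- Top row of the two-row tableau of the charged symmetric bipartition
`|(λ,λ), (0, e/2)⟩`, where `d ≥ e/2` satisfies `λ_{d+1-e/2} = λ_{d+1} = 0`. -/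
def topInit (p : ℕ → ℕ) (e d : ℕ) : List ℤ :=
  (List.range (d + 1)).map (fun (t : ℕ) =>
    ((e / 2 : ℕ) : ℤ) - (d : ℤ) + (t : ℤ) + (Int.ofNat (p (d + 1 - t))))

/-- Bottom row of the two-row tableau of `|(λ,λ), (0, e/2)⟩`. -/
def botInit (p : ℕ → ℕ) (e d : ℕ) : List ℤ :=
  (List.range (d + 1 - e / 2)).map (fun (t : ℕ) =>
    ((e / 2 : ℕ) : ℤ) - (d : ℤ) + (t : ℤ) + (Int.ofNat (p (d + 1 - e / 2 - t))))

/-- The iterated sequence of two-row tableaux: `tab p e d 0` is the tableau of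
`|(λ,λ),(0,e/2)⟩` and `tab p e d (k+1) = Δ_e (wc (tab p e d k))`. -/
def tab (p : ℕ → ℕ) (e d : ℕ) : ℕ → List ℤ × List ℤ
  | 0 => (topInit p e d, botInit p e d)
  | k + 1 =>
    (deltaTop e (wcTop (tab p e d k).1 (tab p e d k).2) (wcBot (tab p e d k).1 (tab p e d k).2),
      wcBot (tab p e d k).1 (tab p e d k).2)


/-! A hole `h` is never used, so it is available at every step of the greedy procedure.
Hence, by the maximality of the greedy choice on one side and by the absence of cycles and the
monotonicity of the top row on the other, `b^j` is paired left of `h` exactly when `b^j < a^h`.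
So the paired positions left of `h` are as many as the bottom entries below `a^h`, and since `M`
and the bottom row are both order-preserving, `M(b^j)` lies left of `h` exactly when `b^j < a^h`.
After the swap, `a^h` therefore has no larger entry before it and no smaller one after it, and
sorting leaves such a pivot in place. -/

namespace List

variable {α : Type*}

/-- In a weakly increasing list the entries satisfying a downward-closed predicate form a
prefix. -/
theorem Pairwise.apply_getElem_iff_lt_countP [Preorder α] {p : α → Bool}
    (hp : ∀ x y, x ≤ y → p y → p x) :
    ∀ {L : List α}, L.Pairwise (· ≤ ·) → ∀ {k : ℕ} (hk : k < L.length),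
      p L[k] ↔ k < L.countP p
  | [], _, _, hk => absurd hk (Nat.not_lt_zero _)
  | x :: l, hL, k, hk => by
    rw [pairwise_cons] at hL
    by_cases hx : p x
    · cases k with
      | zero => simp [hx]
      | succ k =>
        simpa [hx] using hL.2.apply_getElem_iff_lt_countP hp (k := k) (by simpa using hk)
    · have hl : l.countP p = 0 :=
        countP_eq_zero.2 fun y hy hpy => hx (hp x y (hL.1 y hy) hpy)
      cases k with
      | zero => simp [hx, hl]
      | succ k =>
        simpa [hx, hl] using fun hpk => hx (hp x _ (hL.1 _ (getElem_mem _)) hpk)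

theorem Perm.getElem_eq_of_pivot [LinearOrder α] {L W : List α} (hperm : W ~ L)
    (hW : W.Pairwise (· ≤ ·)) {k : ℕ} (hk : k < L.length) {c : α}
    (hle : ∀ i (hi : i < L.length), i ≤ k → L[i] ≤ c)
    (hge : ∀ i (hi : i < L.length), k ≤ i → c ≤ L[i]) :
    W[k]'(hperm.length_eq ▸ hk) = c := by
  have hk' : k < W.length := hperm.length_eq ▸ hk
  have hcount_le : k + 1 ≤ L.countP (· ≤ c) := by
    have hprefix : (L.take (k + 1)).countP (· ≤ c) = k + 1 := by
      rw [countP_eq_length.2, length_take_of_le hk]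
      intro x hx
      obtain ⟨i, hi, rfl⟩ := mem_take_iff_getElem.1 hx
      simpa using hle i _ (by omega)
    exact hprefix ▸ (take_sublist _ _).countP_le
  have hcount_lt : L.countP (· < c) ≤ k := by
    have hsuffix : (L.drop k).countP (· < c) = 0 := by
      refine countP_eq_zero.2 fun x hx => ?_
      obtain ⟨i, hi, rfl⟩ := mem_drop_iff_getElem.1 hx
      simpa using hge (k + i) _ (by omega)
    calc L.countP (· < c) = (L.take k).countP (· < c) := by
          rw [← add_zero ((L.take k).countP _), ← hsuffix, ← countP_append, take_append_drop]
      _ ≤ k := (countP_le_length).trans (length_take_le _ _)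
  refine le_antisymm ?_ (not_lt.1 fun hlt => ?_)
  · have hp : ∀ x y : α, x ≤ y → y ≤ c → x ≤ c := fun _ _ => le_trans
    simpa using (hW.apply_getElem_iff_lt_countP (p := (· ≤ c)) (by simpa using hp) hk').2
      (by rw [hperm.countP_eq]; omega)
  · have hp : ∀ x y : α, x ≤ y → y < c → x < c := fun _ _ => lt_of_le_of_lt
    have := (hW.apply_getElem_iff_lt_countP (p := (· < c)) (by simpa using hp) hk').1
      (by simpa using hlt)
    rw [hperm.countP_eq] at this
    omega

end List

lemma ent_mono {L : List ℤ} (hL : L.Pairwise (· ≤ ·)) {i j : ℕ} (hi : 1 ≤ i) (hij : i ≤ j)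
    (hj : j ≤ L.length) : ent L i ≤ ent L j := by
  rw [ent, ent, List.getD_eq_getElem _ _ (by omega), List.getD_eq_getElem _ _ (by omega)]
  exact hL.rel_get_of_le (a := ⟨i - 1, by omega⟩) (b := ⟨j - 1, by omega⟩) (by simp; omega)

lemma map_ent_range' (L : List ℤ) : (List.range' 1 L.length).map (ent L) = L := by
  refine List.ext_getElem (by simp) fun i h₁ h₂ => ?_
  simp [ent, h₂, Nat.add_comm 1 i]

section pickPos

variable {A : List ℤ} {used : Finset ℕ} {x : ℤ}

lemma pickPos_mem (hne : (Finset.Icc 1 A.length \ used).Nonempty) :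
    pickPos A used x ∈ Finset.Icc 1 A.length \ used := by
  dsimp only [pickPos]
  split_ifs with hcand
  · rw [← Finset.coe_max' hcand, WithBot.unbotD_coe]
    exact (Finset.mem_filter.1 (Finset.max'_mem _ hcand)).1
  · rw [← Finset.coe_max' hne, WithBot.unbotD_coe]
    exact Finset.max'_mem _ hne

lemma le_pickPos {i : ℕ} (hi : i ∈ Finset.Icc 1 A.length \ used) (hix : ent A i ≤ x) :
    i ≤ pickPos A used x := by
  have hcand : ((Finset.Icc 1 A.length \ used).filter fun i => ent A i ≤ x).Nonempty :=
    ⟨i, Finset.mem_filter.2 ⟨hi, hix⟩⟩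
  dsimp only [pickPos]
  rw [if_pos hcand, ← Finset.coe_max' hcand, WithBot.unbotD_coe]
  exact Finset.le_max' _ i (Finset.mem_filter.2 ⟨hi, hix⟩)

end pickPos

lemma usedPos_eq_toFinset (A B : List ℤ) (j : ℕ) :
    usedPos A B j = ((List.range' 1 j).map (Spos A B)).toFinset := by
  induction j with
  | zero => rfl
  | succ j ih =>
    rw [usedPos, List.range'_concat, List.map_append, List.toFinset_append, ← ih,
      Finset.union_comm]
    simp [Spos, Nat.add_comm 1 j]

lemma usedPos_mono (A B : List ℤ) : Monotone (usedPos A B) :=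
  monotone_nat_of_le_succ fun _ => Finset.subset_insert _ _

section Hole

variable {A B : List ℤ} {h : ℕ}

lemma IsHole.mem_sdiff_usedPos (hh : IsHole A B h) {j : ℕ} (hj : j ≤ B.length) :
    h ∈ Finset.Icc 1 A.length \ usedPos A B j :=
  Finset.mem_sdiff.2 ⟨hh.1, fun hu => hh.2 (usedPos_mono A B hj hu)⟩

lemma Spos_mem_of_isHole (hh : IsHole A B h) {j : ℕ} (hj : j ≤ B.length) :
    Spos A B j ∈ Finset.Icc 1 A.length \ usedPos A B (j - 1) :=
  pickPos_mem ⟨h, hh.mem_sdiff_usedPos (by omega)⟩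

lemma nodup_map_Spos (hh : IsHole A B h) :
    ((List.range' 1 B.length).map (Spos A B)).Nodup := by
  suffices ∀ j ≤ B.length, ((List.range' 1 j).map (Spos A B)).Nodup from this _ le_rfl
  intro j hj
  induction j with
  | zero => simp
  | succ j ih =>
    have hfresh := (Finset.mem_sdiff.1 (Spos_mem_of_isHole hh hj)).2
    rw [Nat.add_sub_cancel, usedPos_eq_toFinset, List.mem_toFinset] at hfresh
    rw [List.range'_concat, List.map_append, List.nodup_append]
    refine ⟨ih (by omega), List.nodup_singleton _, ?_⟩
    simp only [List.map_cons, List.map_nil, List.mem_singleton, one_mul, Nat.add_comm 1 j]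
    rintro _ ha _ rfl rfl
    exact hfresh ha

lemma sort_matchedPos_perm (hh : IsHole A B h) :
    ((matchedPos A B).sort (· ≤ ·)).Perm ((List.range' 1 B.length).map (Spos A B)) :=
  List.perm_of_nodup_nodup_toFinset_eq (Finset.sort_nodup _ _) (nodup_map_Spos hh)
    (by rw [Finset.sort_toFinset, matchedPos, usedPos_eq_toFinset])

lemma Spos_lt_iff (hA : A.Pairwise (· ≤ ·)) (hnc : NoCycles A B) (hh : IsHole A B h) {j : ℕ}
    (hj1 : 1 ≤ j) (hj : j ≤ B.length) : Spos A B j < h ↔ ent B j < ent A h := by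
  have hhole := hh.mem_sdiff_usedPos (j := j - 1) (by omega)
  have hSpos := Finset.mem_Icc.1 (Finset.mem_sdiff.1 (Spos_mem_of_isHole hh hj)).1
  constructor
  · exact fun hlt => not_le.1 fun hle => hlt.not_ge (le_pickPos hhole hle)
  · exact fun hlt => not_le.1 fun hle =>
      (ent_mono hA (Finset.mem_Icc.1 hh.1).1 hle hSpos.2).trans (hnc j hj1 hj) |>.not_gt hlt

lemma length_sort_matchedPos (hh : IsHole A B h) :
    ((matchedPos A B).sort (· ≤ ·)).length = B.length := by
  simp [(sort_matchedPos_perm hh).length_eq]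

lemma countP_sort_matchedPos (hA : A.Pairwise (· ≤ ·)) (hnc : NoCycles A B) (hh : IsHole A B h) :
    ((matchedPos A B).sort (· ≤ ·)).countP (· < h) = B.countP (· < ent A h) := by
  conv_rhs => rw [← map_ent_range' B]
  rw [(sort_matchedPos_perm hh).countP_eq, List.countP_map, List.countP_map]
  refine List.countP_congr fun j hj => ?_
  obtain ⟨hj1, hj⟩ : 1 ≤ j ∧ j ≤ B.length := by simp [List.mem_range'_1] at hj; omega
  simpa using Spos_lt_iff hA hnc hh hj1 hj

lemma Mpos_lt_iff (hA : A.Pairwise (· ≤ ·)) (hB : B.Pairwise (· ≤ ·)) (hnc : NoCycles A B)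
    (hh : IsHole A B h) {j : ℕ} (hj1 : 1 ≤ j) (hj : j ≤ B.length) :
    Mpos A B j < h ↔ ent B j < ent A h := by
  have hS := length_sort_matchedPos hh
  have hpS := ((Finset.pairwise_sort (matchedPos A B) (· ≤ ·)).apply_getElem_iff_lt_countP
    (p := (· < h)) (by simpa using fun _ _ => lt_of_le_of_lt) (k := j - 1) (by omega))
  have hpB := (hB.apply_getElem_iff_lt_countP
    (p := (· < ent A h)) (by simpa using fun _ _ => lt_of_le_of_lt) (k := j - 1) (by omega))
  simp only [decide_eq_true_eq] at hpS hpB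
  rw [Mpos, ent, List.getD_eq_getElem _ _ (by omega), List.getD_eq_getElem _ _ (by omega), hpS,
    hpB, countP_sort_matchedPos hA hnc hh]

lemma swappedTop_getElem_le_of_isHole (hA : A.Pairwise (· ≤ ·)) (hB : B.Pairwise (· ≤ ·))
    (hnc : NoCycles A B) (hh : IsHole A B h) {t : ℕ} (ht : t < (swappedTop A B).length) :
    (t + 1 ≤ h → (swappedTop A B)[t] ≤ ent A h) ∧ (h ≤ t + 1 → ent A h ≤ (swappedTop A B)[t]) := by
  have hhA := Finset.mem_Icc.1 hh.1
  have htA : t < A.length := by simpa [swappedTop] using ht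
  simp only [swappedTop, List.getElem_map, List.getElem_range]
  split_ifs with hm
  · set S := (matchedPos A B).sort (· ≤ ·)
    have hidx : S.idxOf (t + 1) < S.length :=
      List.idxOf_lt_length_iff.2 ((Finset.mem_sort _).2 hm)
    have hM : Mpos A B (S.idxOf (t + 1) + 1) = t + 1 := by
      rw [Mpos, Nat.add_sub_cancel, List.getD_eq_getElem _ _ hidx, List.getElem_idxOf]
    have hne : t + 1 ≠ h := fun he => hh.2 (he ▸ hm)
    have hiff := Mpos_lt_iff hA hB hnc hh (j := S.idxOf (t + 1) + 1) (by omega)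
      (hidx.trans_eq (length_sort_matchedPos hh))
    rw [hM] at hiff
    exact ⟨fun hth => (hiff.1 (lt_of_le_of_ne hth hne)).le,
      fun hth => not_lt.1 fun hlt => (hiff.2 hlt).not_ge hth⟩
  · exact ⟨fun hth => ent_mono hA (by omega) hth hhA.2,
      fun hth => ent_mono hA hhA.1 hth (by omega)⟩

theorem ent_wcTop_of_isHole (hA : A.Pairwise (· ≤ ·)) (hB : B.Pairwise (· ≤ ·))
    (hnc : NoCycles A B) (hh : IsHole A B h) : ent (wcTop A B) h = ent A h := by
  have hhA := Finset.mem_Icc.1 hh.1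
  have hlen : (swappedTop A B).length = A.length := by simp [swappedTop]
  have hpivot := (List.perm_insertionSort (· ≤ ·) (swappedTop A B)).getElem_eq_of_pivot
    (List.pairwise_insertionSort _ _) (k := h - 1) (by omega)
    (fun t ht hth => (swappedTop_getElem_le_of_isHole hA hB hnc hh ht).1 (by omega))
    (fun t ht hth => (swappedTop_getElem_le_of_isHole hA hB hnc hh ht).2 (by omega))
  rw [ent, wcTop, List.getD_eq_getElem _ _ (by simp; omega), hpivot]

end Hole

theorem stmt2_general (A B : List ℤ) (hA : List.Pairwise (· ≤ ·) A) (hB : List.Pairwise (· ≤ ·) B)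
    (hnc : NoCycles A B) :
    ∀ h, IsHole A B h →
      ent (wcTop A B) h = ent A h ∧
      ∀ j, 1 ≤ j → j ≤ B.length →
        (Mpos A B j < h → ent B j ≤ ent A h) ∧ (h < Mpos A B j → ent A h ≤ ent B j) := by
  intro h hh
  refine ⟨ent_wcTop_of_isHole hA hB hnc hh, fun j hj1 hj => ⟨fun hlt => ?_, fun hgt => ?_⟩⟩
  · exact ((Mpos_lt_iff hA hB hnc hh hj1 hj).1 hlt).le
  · exact not_lt.1 fun hlt => hgt.not_gt ((Mpos_lt_iff hA hB hnc hh hj1 hj).2 hlt)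

/-- if no cycles occur, holes are fixed (in value and position) by
wall-crossing: the entry at a hole position `h` of the re-sorted top row equals
`a^h`; equivalently every `b^j` with `M(b^j)` strictly left (resp. right) of `h`
satisfies `b^j ≤ a^h` (resp. `b^j ≥ a^h`). -/
theorem stmt2 (A B : List ℤ) (hA : List.Pairwise (· ≤ ·) A) (hB : List.Pairwise (· ≤ ·) B)
    (hlen : B.length ≤ A.length)
    (hnc : NoCycles A B) :
    ∀ h, IsHole A B h →
      ent (wcTop A B) h = ent A h ∧
      ∀ j, 1 ≤ j → j ≤ B.length →
        (Mpos A B j < h → ent B j ≤ ent A h) ∧ (h < Mpos A B j → ent A h ≤ ent B j) :=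
  stmt2_general A B hA hB hnc
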